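/- arXiv:2303.04094 — 3 statements merged into one kernel-verified Lean document; each statement's English description precedes it below -/
import Mathlib

section
/- Let X be a Banach space, S : X → X a map, A ⊆ X a compact set with S(A) = A. Suppose P : X → X is a linear projection onto a subspace of finite dimension Λ, and there are constants a, b > 0 with ‖P S(φ) − P S(ψ)‖ ≤ a‖φ − ψ‖ and ‖(I − P) S(φ) − (I − P) S(ψ)‖ ≤ b‖φ − ψ‖ for all φ, ψ ∈ A. If there exists α ∈ (0,2) with η := α a + 2b < 1, then the d-dimensional Hausdorff measure of A is zero for every d > (−ln Λ − Λ ln(2 + 4/α)) / ln η; in particular the Hausdorff dimension of A is at most this bound. -/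
open Metric Set MeasureTheory Filter
open scoped ENNReal NNReal Topology

/-!
Applying `S` to `A ∩ closedBall c ρ` (with `c ∈ A`) produces a set whose `P`-part lies in a
ball of radius `aρ` in the `Λ`-dimensional space `range P` and whose `(I - P)`-part stays within
`bρ` of that of `S c`. A volume count covers that finite-dimensional ball by `(1 + 4/α)^Λ` balls
of radius `αaρ/2`; recentring the resulting balls at points of `A = S(A)` doubles their radius.
So any cover of `A` by balls of radius `ρ` refines to one with `(1 + 4/α)^Λ` times as many balls
of radius `ηρ`, where `η = αa + 2b < 1`. Iterating, `A` is covered by `N^n` balls of radius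
`η^n r` with `N = (1 + 4/α)^Λ`, so `μH[d] A = 0` as soon as `N η^d < 1`, i.e. for
`d > -log N / log η`; the stated bound exceeds this threshold.
-/

section Volumetric

variable {E : Type*} [NormedAddCommGroup E] [NormedSpace ℝ E] [FiniteDimensional ℝ E]

-- The disjoint balls of radius `ε / 2` around the points of `t` fit into `ball x (R + ε / 2)`.
theorem Finset.card_le_of_isSeparated_of_subset_closedBall {t : Finset E} {x : E} {R : ℝ}
    {ε : ℝ≥0} (hR : 0 ≤ R) (hε : 0 < ε) (ht : (t : Set E) ⊆ closedBall x R)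
    (hsep : IsSeparated ε (t : Set E)) :
    (t.card : ℝ) ≤ ((2 * R + ε) / ε) ^ Module.finrank ℝ E := by
  borelize E
  set μ : Measure E := Measure.addHaar
  have hε' : (0 : ℝ) < ε := hε
  have hdisj : (t : Set E).PairwiseDisjoint fun y => ball y (ε / 2) := by
    intro y hy z hz hyz
    refine ball_disjoint_ball ?_
    have h : (ε : ℝ≥0∞) < edist y z := hsep hy hz hyz
    rw [edist_nndist, ENNReal.coe_lt_coe, ← NNReal.coe_lt_coe, coe_nndist] at h
    linarith
  have hsub : (⋃ y ∈ t, ball y (ε / 2)) ⊆ ball x (R + ε / 2) :=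
    iUnion₂_subset fun y hy => ball_subset_ball' (by linarith [mem_closedBall.1 (ht hy)])
  have hvol :
      (t.card : ℝ≥0∞) * ENNReal.ofReal ((ε / 2) ^ Module.finrank ℝ E) * μ (ball 0 1) ≤
        ENNReal.ofReal ((R + ε / 2) ^ Module.finrank ℝ E) * μ (ball 0 1) := by
    calc (t.card : ℝ≥0∞) * ENNReal.ofReal ((ε / 2) ^ Module.finrank ℝ E) * μ (ball 0 1)
        = μ (⋃ y ∈ t, ball y (ε / 2)) := by
          rw [measure_biUnion_finset hdisj fun y _ => measurableSet_ball]
          simp only [μ.addHaar_ball_of_pos _ (half_pos hε'), Finset.sum_const, nsmul_eq_mul,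
            mul_assoc]
      _ ≤ μ (ball x (R + ε / 2)) := measure_mono hsub
      _ = ENNReal.ofReal ((R + ε / 2) ^ Module.finrank ℝ E) * μ (ball 0 1) :=
          μ.addHaar_ball_of_pos _ (by positivity)
  have hcard :
      (t.card : ℝ) * (ε / 2) ^ Module.finrank ℝ E ≤ (R + ε / 2) ^ Module.finrank ℝ E := by
    rw [← ENNReal.ofReal_le_ofReal_iff (by positivity), ENNReal.ofReal_mul (by positivity),
      ENNReal.ofReal_natCast]
    exact (ENNReal.mul_le_mul_iff_left (measure_ball_pos μ 0 one_pos).ne'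
      measure_ball_lt_top.ne).1 hvol
  rwa [show (2 * R + ε) / ε = (R + ε / 2) / (ε / 2) by field_simp, div_pow,
    le_div_iff₀ (by positivity)]

theorem exists_finset_card_le_closedBall_subset_biUnion (x : E) {R : ℝ} {ε : ℝ≥0}
    (hR : 0 ≤ R) (hε : 0 < ε) :
    ∃ t : Finset E, (t.card : ℝ) ≤ ((2 * R + ε) / ε) ^ Module.finrank ℝ E ∧
      closedBall x R ⊆ ⋃ y ∈ t, closedBall y ε := by
  have hpack : packingNumber ε (closedBall x R) ≠ ⊤ := by
    obtain ⟨N, -, hNfin, hN⟩ := exists_finite_isCover_of_isCompact (ε := ε / 2)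
      (by positivity) (isCompact_closedBall x R)
    refine (lt_of_le_of_lt ?_ hNfin.encard_lt_top).ne
    calc packingNumber ε (closedBall x R) = packingNumber (2 * (ε / 2)) (closedBall x R) := by
          rw [mul_div_cancel₀ _ two_ne_zero]
      _ ≤ externalCoveringNumber (ε / 2) (closedBall x R) :=
          packingNumber_two_mul_le_externalCoveringNumber _ _
      _ ≤ N.encard := hN.externalCoveringNumber_le_encard
  set C := maximalSeparatedSet ε (closedBall x R)
  have hCfin : C.Finite := by
    rw [← Set.encard_ne_top_iff, encard_maximalSeparatedSet hpack]
    exact hpack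
  refine ⟨hCfin.toFinset, ?_, ?_⟩
  · refine Finset.card_le_of_isSeparated_of_subset_closedBall (x := x) hR hε ?_ ?_
    · simpa using maximalSeparatedSet_subset
    · simpa using isSeparated_maximalSeparatedSet
  · simpa using (isCover_maximalSeparatedSet hpack).subset_iUnion_closedBall

end Volumetric

theorem exists_finset_card_le_subset_biUnion_of_linearMap_range {X : Type*}
    [NormedAddCommGroup X] [NormedSpace ℝ X] (P : X →ₗ[ℝ] X)
    [FiniteDimensional ℝ (LinearMap.range P)] {B : Set X} (x₀ : X) {r s ε : ℝ} (hr : 0 ≤ r)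
    (hε : 0 < ε) (hP : ∀ x ∈ B, ‖P x - P x₀‖ ≤ r)
    (hQ : ∀ x ∈ B, ‖(x - P x) - (x₀ - P x₀)‖ ≤ s) :
    ∃ t : Finset X,
      (t.card : ℝ) ≤ ((2 * r + ε) / ε) ^ Module.finrank ℝ (LinearMap.range P) ∧
        B ⊆ ⋃ y ∈ t, closedBall y (ε + s) := by
  classical
  obtain ⟨t, htcard, htcov⟩ := exists_finset_card_le_closedBall_subset_biUnion
    (⟨P x₀, LinearMap.mem_range_self P x₀⟩ : LinearMap.range P) hr (ε := ε.toNNReal)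
    (Real.toNNReal_pos.2 hε)
  rw [Real.coe_toNNReal _ hε.le] at htcard htcov
  refine ⟨t.image fun e : LinearMap.range P => (e : X) + (x₀ - P x₀),
    (Nat.cast_le.2 Finset.card_image_le).trans htcard, ?_⟩
  intro x hx
  have hPx : (⟨P x, LinearMap.mem_range_self P x⟩ : LinearMap.range P) ∈
      closedBall ⟨P x₀, LinearMap.mem_range_self P x₀⟩ r := by
    simpa [dist_eq_norm] using hP x hx
  obtain ⟨e, he, hxe⟩ := mem_iUnion₂.1 (htcov hPx)
  refine mem_iUnion₂.2 ⟨(e : X) + (x₀ - P x₀), Finset.mem_image_of_mem _ he, ?_⟩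
  have hxe' : ‖P x - e‖ ≤ ε := by simpa [dist_eq_norm] using hxe
  rw [mem_closedBall, dist_eq_norm]
  calc ‖x - ((e : X) + (x₀ - P x₀))‖ = ‖(P x - e) + ((x - P x) - (x₀ - P x₀))‖ := by
        congr 1; abel
    _ ≤ ‖P x - e‖ + ‖(x - P x) - (x₀ - P x₀)‖ := norm_add_le _ _
    _ ≤ ε + s := add_le_add hxe' (hQ x hx)

theorem exists_finset_subset_card_le_of_subset_biUnion_closedBall {X : Type*}
    [PseudoMetricSpace X] {s : Set X} {t : Finset X} {r : ℝ}
    (h : s ⊆ ⋃ z ∈ t, closedBall z r) :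
    ∃ t' : Finset X, ↑t' ⊆ s ∧ t'.card ≤ t.card ∧
      s ⊆ ⋃ y ∈ t', closedBall y (2 * r) := by
  classical
  choose! g hg using fun z (hz : (closedBall z r ∩ s).Nonempty) => hz
  refine ⟨(t.filter fun z => (closedBall z r ∩ s).Nonempty).image g, ?_,
    Finset.card_image_le.trans (Finset.card_filter_le _ _), ?_⟩
  · intro y hy
    obtain ⟨z, hz, rfl⟩ := Finset.mem_image.1 hy
    exact (hg z (Finset.mem_filter.1 hz).2).2
  · intro x hx
    obtain ⟨z, hz, hxz⟩ := mem_iUnion₂.1 (h hx)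
    have hne : (closedBall z r ∩ s).Nonempty := ⟨x, hxz, hx⟩
    refine mem_iUnion₂.2
      ⟨g z, Finset.mem_image_of_mem _ (Finset.mem_filter.2 ⟨hz, hne⟩), ?_⟩
    rw [mem_closedBall, two_mul]
    exact (dist_triangle x z (g z)).trans
      (add_le_add hxz (by rw [dist_comm]; exact (hg z hne).1))

theorem exists_finset_subset_card_le_pow_subset_biUnion {X : Type*} [PseudoMetricSpace X]
    {A : Set X} {N η r : ℝ} {c : X} (hN : 0 ≤ N) (hη : 0 < η) (hr : 0 < r) (hc : c ∈ A)
    (hA : A ⊆ closedBall c r)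
    (hrefine : ∀ ρ > 0, ∀ t : Finset X, ↑t ⊆ A → A ⊆ ⋃ y ∈ t, closedBall y ρ →
      ∃ t' : Finset X, ↑t' ⊆ A ∧ (t'.card : ℝ) ≤ N * t.card ∧
        A ⊆ ⋃ y ∈ t', closedBall y (η * ρ))
    (n : ℕ) :
    ∃ t : Finset X, ↑t ⊆ A ∧ (t.card : ℝ) ≤ N ^ n ∧
      A ⊆ ⋃ y ∈ t, closedBall y (η ^ n * r) := by
  induction n with
  | zero => exact ⟨{c}, by simpa using hc, by simp, by simpa using hA⟩
  | succ n ih =>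
    obtain ⟨t, htA, htcard, htcov⟩ := ih
    obtain ⟨t', ht'A, ht'card, ht'cov⟩ := hrefine _ (by positivity) t htA htcov
    refine ⟨t', ht'A, ?_, by rwa [pow_succ', mul_assoc]⟩
    calc (t'.card : ℝ) ≤ N * t.card := ht'card
      _ ≤ N * N ^ n := mul_le_mul_of_nonneg_left htcard hN
      _ = N ^ (n + 1) := (pow_succ' N n).symm

theorem hausdorffMeasure_eq_zero_of_forall_finset_cover {X : Type*} [MetricSpace X]
    [MeasurableSpace X] [BorelSpace X] {A : Set X} {N η r d : ℝ} (hη0 : 0 ≤ η)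
    (hη1 : η < 1) (hr : 0 ≤ r) (hd : 0 ≤ d) (hNη : N * η ^ d < 1)
    (hcov : ∀ n : ℕ, ∃ t : Finset X, (t.card : ℝ) ≤ N ^ n ∧
      A ⊆ ⋃ y ∈ t, closedBall y (η ^ n * r)) :
    μH[d] A = 0 := by
  choose T hTcard hTcov using hcov
  set δ : ℕ → ℝ := fun n => η ^ n * (2 * r)
  have hN : 0 ≤ N := by simpa using (Nat.cast_nonneg _).trans (hTcard 1)
  have hδ : Tendsto (fun n => ENNReal.ofReal (δ n)) atTop (𝓝 0) := by
    simpa using ENNReal.tendsto_ofReal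
      ((tendsto_pow_atTop_nhds_zero_of_lt_one hη0 hη1).mul_const (2 * r))
  have hdiam : ∀ n, ∀ y : T n,
      ediam (closedBall (y : X) (η ^ n * r)) ≤ ENNReal.ofReal (δ n) := fun n y =>
    ediam_le_of_forall_dist_le fun x hx z hz => (dist_triangle_right x z y).trans
      (by linarith [mem_closedBall.1 hx, mem_closedBall.1 hz])
  have hsum : ∀ n, ∑ y : T n, ediam (closedBall (y : X) (η ^ n * r)) ^ d ≤
      ENNReal.ofReal ((2 * r) ^ d * (N * η ^ d) ^ n) := fun n =>
    calc ∑ y : T n, ediam (closedBall (y : X) (η ^ n * r)) ^ d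
        ≤ ∑ _y : T n, ENNReal.ofReal (δ n) ^ d :=
          Finset.sum_le_sum fun y _ => ENNReal.rpow_le_rpow (hdiam n y) hd
      _ = (T n).card * ENNReal.ofReal (δ n ^ d) := by
          rw [Finset.sum_const, nsmul_eq_mul, Finset.card_univ, Fintype.card_coe,
            ENNReal.ofReal_rpow_of_nonneg (by positivity) hd]
      _ ≤ ENNReal.ofReal (N ^ n * δ n ^ d) := by
          rw [ENNReal.ofReal_mul (by positivity), ← ENNReal.ofReal_natCast]
          gcongr
          exact hTcard n
      _ = ENNReal.ofReal ((2 * r) ^ d * (N * η ^ d) ^ n) := by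
          rw [Real.mul_rpow (by positivity) (by positivity), ← Real.rpow_pow_comm hη0]
          ring_nf
  have hlim :
      Tendsto (fun n => ENNReal.ofReal ((2 * r) ^ d * (N * η ^ d) ^ n)) atTop (𝓝 0) := by
    simpa using ENNReal.tendsto_ofReal
      ((tendsto_pow_atTop_nhds_zero_of_lt_one (by positivity) hNη).const_mul ((2 * r) ^ d))
  refine le_antisymm ?_ zero_le
  calc μH[d] A
      ≤ liminf (fun n => ∑ y : T n, ediam (closedBall (y : X) (η ^ n * r)) ^ d) atTop :=
        Measure.hausdorffMeasure_le_liminf_sum d A _ hδ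
          (fun n (y : T n) => closedBall (y : X) (η ^ n * r)) (.of_forall hdiam)
          (.of_forall fun n x hx => by
            obtain ⟨y, hy, hxy⟩ := mem_iUnion₂.1 (hTcov n hx)
            exact mem_iUnion.2 ⟨⟨y, hy⟩, hxy⟩)
    _ ≤ liminf (fun n => ENNReal.ofReal ((2 * r) ^ d * (N * η ^ d) ^ n)) atTop :=
        liminf_le_liminf (.of_forall hsum)
    _ = 0 := hlim.liminf_eq

theorem dimH_le_ofReal_of_forall_lt_hausdorffMeasure_eq_zero {X : Type*} [EMetricSpace X]
    [MeasurableSpace X] [BorelSpace X] {s : Set X} {D : ℝ}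
    (h : ∀ d : ℝ, D < d → μH[d] s = 0) : dimH s ≤ ENNReal.ofReal D := by
  refine dimH_le fun d hd => ?_
  by_contra! hlt
  rw [← ENNReal.ofReal_coe_nnreal, ENNReal.ofReal_lt_ofReal_iff'] at hlt
  simp [h d hlt.1] at hd

theorem pow_mul_rpow_lt_one_of_div_log_lt {c η d : ℝ} {Λ : ℕ} (hΛ : 1 ≤ Λ) (hc : 0 < c)
    (hη0 : 0 < η) (hη1 : η < 1) (hd : (-Real.log Λ - Λ * Real.log c) / Real.log η < d) :
    c ^ Λ * η ^ d < 1 := by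
  rw [div_lt_iff_of_neg (Real.log_neg hη0 hη1)] at hd
  have hlogΛ : 0 ≤ Real.log Λ := Real.log_nonneg (Nat.one_le_cast.2 hΛ)
  rw [← Real.log_neg_iff (by positivity), Real.log_mul (by positivity) (by positivity),
    Real.log_pow, Real.log_rpow hη0]
  linarith

section Squeezing

variable {X : Type*} [NormedAddCommGroup X] [NormedSpace ℝ X]
  {S : X → X} {A : Set X} {P : X →ₗ[ℝ] X} {a b α : ℝ}

theorem exists_finset_card_le_image_closedBall_inter_subset_biUnion
    [FiniteDimensional ℝ (LinearMap.range P)]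
    (hP : ∀ φ ∈ A, ∀ ψ ∈ A, ‖P (S φ) - P (S ψ)‖ ≤ a * ‖φ - ψ‖)
    (hQ : ∀ φ ∈ A, ∀ ψ ∈ A, ‖(S φ - P (S φ)) - (S ψ - P (S ψ))‖ ≤ b * ‖φ - ψ‖)
    (ha : 0 < a) (hb : 0 ≤ b) (hα : 0 < α) {c : X} (hc : c ∈ A) {ρ : ℝ} (hρ : 0 < ρ) :
    ∃ t : Finset X, (t.card : ℝ) ≤ (1 + 4 / α) ^ Module.finrank ℝ (LinearMap.range P) ∧
      S '' (closedBall c ρ ∩ A) ⊆ ⋃ y ∈ t, closedBall y ((α * a + 2 * b) / 2 * ρ) := by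
  have hdist : ∀ φ ∈ closedBall c ρ ∩ A, ‖φ - c‖ ≤ ρ := fun φ hφ => by
    simpa [dist_eq_norm] using hφ.1
  obtain ⟨t, htcard, htcov⟩ := exists_finset_card_le_subset_biUnion_of_linearMap_range P (S c)
    (B := S '' (closedBall c ρ ∩ A)) (r := a * ρ) (s := b * ρ) (ε := α * a * ρ / 2)
    (by positivity) (by positivity)
    (by
      rintro _ ⟨φ, hφ, rfl⟩
      exact (hP φ hφ.2 c hc).trans (mul_le_mul_of_nonneg_left (hdist φ hφ) ha.le))
    (by
      rintro _ ⟨φ, hφ, rfl⟩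
      exact (hQ φ hφ.2 c hc).trans (mul_le_mul_of_nonneg_left (hdist φ hφ) hb))
  have hcount : (2 * (a * ρ) + α * a * ρ / 2) / (α * a * ρ / 2) = 1 + 4 / α := by
    field_simp
    ring
  have hradius : α * a * ρ / 2 + b * ρ = (α * a + 2 * b) / 2 * ρ := by ring
  exact ⟨t, hcount ▸ htcard, hradius ▸ htcov⟩

theorem exists_finset_card_le_mul_subset_biUnion_of_subset_image
    [FiniteDimensional ℝ (LinearMap.range P)] (hinv : A ⊆ S '' A)
    (hP : ∀ φ ∈ A, ∀ ψ ∈ A, ‖P (S φ) - P (S ψ)‖ ≤ a * ‖φ - ψ‖)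
    (hQ : ∀ φ ∈ A, ∀ ψ ∈ A, ‖(S φ - P (S φ)) - (S ψ - P (S ψ))‖ ≤ b * ‖φ - ψ‖)
    (ha : 0 < a) (hb : 0 ≤ b) (hα : 0 < α) {ρ : ℝ} (hρ : 0 < ρ) {t : Finset X}
    (htA : ↑t ⊆ A) (ht : A ⊆ ⋃ y ∈ t, closedBall y ρ) :
    ∃ t' : Finset X, ↑t' ⊆ A ∧
      (t'.card : ℝ) ≤ (1 + 4 / α) ^ Module.finrank ℝ (LinearMap.range P) * t.card ∧
      A ⊆ ⋃ y ∈ t', closedBall y ((α * a + 2 * b) * ρ) := by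
  classical
  choose! s hs hscov using fun y (hy : y ∈ t) =>
    exists_finset_card_le_image_closedBall_inter_subset_biUnion hP hQ ha hb hα (htA hy) hρ
  have hcov : A ⊆ ⋃ z ∈ t.biUnion s, closedBall z ((α * a + 2 * b) / 2 * ρ) := by
    intro x hx
    obtain ⟨φ, hφ, rfl⟩ := hinv hx
    obtain ⟨y, hy, hφy⟩ := mem_iUnion₂.1 (ht hφ)
    obtain ⟨z, hz, hSz⟩ := mem_iUnion₂.1 (hscov y hy ⟨φ, ⟨hφy, hφ⟩, rfl⟩)
    exact mem_iUnion₂.2 ⟨z, Finset.mem_biUnion.2 ⟨y, hy, hz⟩, hSz⟩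
  obtain ⟨t', ht'A, ht'card, ht'cov⟩ :=
    exists_finset_subset_card_le_of_subset_biUnion_closedBall hcov
  refine ⟨t', ht'A, ?_, by rwa [← mul_assoc, mul_div_cancel₀ _ two_ne_zero] at ht'cov⟩
  calc (t'.card : ℝ) ≤ (t.biUnion s).card := Nat.cast_le.2 ht'card
    _ ≤ ∑ y ∈ t, ((s y).card : ℝ) := mod_cast Finset.card_biUnion_le
    _ ≤ ∑ _y ∈ t, (1 + 4 / α) ^ Module.finrank ℝ (LinearMap.range P) :=
        Finset.sum_le_sum hs
    _ = (1 + 4 / α) ^ Module.finrank ℝ (LinearMap.range P) * t.card := by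
        rw [Finset.sum_const, nsmul_eq_mul, mul_comm]

end Squeezing

theorem hausdorff_dim_invariant_set_general
    {X : Type*} [NormedAddCommGroup X] [NormedSpace ℝ X]
    [MeasurableSpace X] [BorelSpace X]
    (S : X → X) (A : Set X) (hA : IsCompact A) (hinv : S '' A = A)
    (P : X →ₗ[ℝ] X)
    (Λ : ℕ) (hΛ : 1 ≤ Λ) (hrank : Module.finrank ℝ (LinearMap.range P) = Λ)
    (a b : ℝ) (ha : 0 < a) (hb : 0 < b)
    (hP : ∀ φ ∈ A, ∀ ψ ∈ A, ‖P (S φ) - P (S ψ)‖ ≤ a * ‖φ - ψ‖)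
    (hQ : ∀ φ ∈ A, ∀ ψ ∈ A, ‖(S φ - P (S φ)) - (S ψ - P (S ψ))‖ ≤ b * ‖φ - ψ‖)
    (α : ℝ) (hα0 : 0 < α) (hη : α * a + 2 * b < 1) :
    (∀ d : ℝ, (-Real.log Λ - Λ * Real.log (2 + 4 / α)) / Real.log (α * a + 2 * b) < d →
      μH[d] A = 0) ∧
    dimH A ≤ ENNReal.ofReal
      ((-Real.log Λ - Λ * Real.log (2 + 4 / α)) / Real.log (α * a + 2 * b)) := by
  have : FiniteDimensional ℝ (LinearMap.range P) := Module.finite_of_finrank_pos (hrank ▸ hΛ)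
  set D := (-Real.log Λ - Λ * Real.log (2 + 4 / α)) / Real.log (α * a + 2 * b)
  have hη0 : 0 < α * a + 2 * b := by positivity
  have hD : 0 < D := by
    refine div_pos_of_neg_of_neg ?_ (Real.log_neg hη0 hη)
    have hΛ' : (1 : ℝ) ≤ Λ := Nat.one_le_cast.2 hΛ
    have hlogΛ : 0 ≤ Real.log Λ := Real.log_nonneg hΛ'
    have hlogc : 0 < Real.log (2 + 4 / α) := Real.log_pos (by linarith [div_pos four_pos hα0])
    nlinarith
  have hmeasure : ∀ d : ℝ, D < d → μH[d] A = 0 := by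
    intro d hd
    rcases A.eq_empty_or_nonempty with rfl | ⟨c, hc⟩
    · exact measure_empty
    obtain ⟨r, hr, hAr⟩ := hA.isBounded.subset_closedBall_lt 0 c
    have hcount : (1 + 4 / α) ^ Λ * (α * a + 2 * b) ^ d < 1 :=
      lt_of_le_of_lt (by gcongr; linarith)
        (pow_mul_rpow_lt_one_of_div_log_lt hΛ (by positivity) hη0 hη hd)
    refine hausdorffMeasure_eq_zero_of_forall_finset_cover hη0.le hη hr.le (hD.trans hd).le
      hcount fun n => ?_
    obtain ⟨t, -, ht⟩ := exists_finset_subset_card_le_pow_subset_biUnion (by positivity) hη0 hr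
      hc hAr (fun ρ hρ t htA ht => hrank ▸
        exists_finset_card_le_mul_subset_biUnion_of_subset_image hinv.superset hP hQ ha hb.le
          hα0 hρ htA ht) n
    exact ⟨t, ht⟩
  exact ⟨hmeasure, dimH_le_ofReal_of_forall_lt_hausdorffMeasure_eq_zero hmeasure⟩

/-- Hausdorff dimension bound for a compact invariant set of a map with a
finite-rank-projection squeezing property in a Banach space. -/
theorem hausdorff_dim_invariant_set
    {X : Type*} [NormedAddCommGroup X] [NormedSpace ℝ X] [CompleteSpace X]
    [MeasurableSpace X] [BorelSpace X]
    (S : X → X) (A : Set X) (hA : IsCompact A) (hinv : S '' A = A)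
    (P : X →ₗ[ℝ] X) (hproj : ∀ x, P (P x) = P x)
    (Λ : ℕ) (hΛ : 1 ≤ Λ) (hrank : Module.finrank ℝ (LinearMap.range P) = Λ)
    (a b : ℝ) (ha : 0 < a) (hb : 0 < b)
    (hP : ∀ φ ∈ A, ∀ ψ ∈ A, ‖P (S φ) - P (S ψ)‖ ≤ a * ‖φ - ψ‖)
    (hQ : ∀ φ ∈ A, ∀ ψ ∈ A, ‖(S φ - P (S φ)) - (S ψ - P (S ψ))‖ ≤ b * ‖φ - ψ‖)
    (α : ℝ) (hα0 : 0 < α) (hα2 : α < 2) (hη : α * a + 2 * b < 1) :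
    (∀ d : ℝ, (-Real.log Λ - Λ * Real.log (2 + 4 / α)) / Real.log (α * a + 2 * b) < d →
      μH[d] A = 0) ∧
    dimH A ≤ ENNReal.ofReal
      ((-Real.log Λ - Λ * Real.log (2 + 4 / α)) / Real.log (α * a + 2 * b)) :=
  hausdorff_dim_invariant_set_general S A hA hinv P Λ hΛ hrank a b ha hb hP hQ α hα0 hη
end

section
/- Under the hypotheses of the previous statement (compact invariant A, finite-rank projection P with dim PX = Λ, Lipschitz bounds a for P∘S and b for (I−P)∘S on A), for any covering of A by balls of radii r_i ≤ ε and any α > 0, one obtains a covering of A = S(A) by at most N·Λ(2 + 4/α)^Λ balls of radii (αa + 2b)r_i; consequently μ_H(A, d, (αa+2b)ε) ≤ Λ(2 + 4/α)^Λ (αa + 2b)^d μ_H(A, d, ε) for all d ≥ 0. -/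
open Metric Set
open MeasureTheory ENNReal

variable {X : Type*} [NormedAddCommGroup X] [NormedSpace ℝ X] [CompleteSpace X]

/-- The Hausdorff pre-measure `μ_H(A, d, ε)`: infimum of `Σ rᵢ^d` over countable
coverings of `A` by balls of radii `rᵢ ≤ ε`. -/
noncomputable def preHausdorff (A : Set X) (d ε : ℝ) : ENNReal :=
  ⨅ (c : ℕ → X × ℝ) (_ : (∀ n, 0 < (c n).2 ∧ (c n).2 ≤ ε) ∧
      A ⊆ ⋃ n, closedBall (c n).1 (c n).2),
    ∑' n, ENNReal.ofReal ((c n).2 ^ d)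

set_option linter.unusedSectionVars false

lemma exists_net (E : Type*) [NormedAddCommGroup E] [NormedSpace ℝ E] [FiniteDimensional ℝ E]
    {δ : ℝ} (hδ : 0 < δ) :
    ∃ (K : ℕ) (z : Fin K → E), 0 < K ∧ (K : ℝ) ≤ (1 + 2/δ) ^ (Module.finrank ℝ E) ∧
      closedBall (0:E) 1 ⊆ ⋃ j, closedBall (z j) δ := by
  classical
  borelize E
  set n := Module.finrank ℝ E with hn
  set μ := (Module.finBasis ℝ E).addHaar with hμ
  set good : Finset E → Prop := fun s =>
    ↑s ⊆ closedBall (0:E) 1 ∧ ∀ x ∈ s, ∀ y ∈ s, x ≠ y → δ < dist x y with hgood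
  have hδ2 : (0:ℝ) < δ/2 := by linarith
  have hbound : ∀ s : Finset E, good s → (s.card : ℝ) ≤ (1 + 2/δ) ^ n := by
    intro s hs
    have hdisj : (↑s : Set E).PairwiseDisjoint (fun x => closedBall x (δ/2)) := by
      intro x hx y hy hxy
      apply closedBall_disjoint_closedBall
      have := hs.2 x hx y hy hxy
      linarith
    have hsub : (⋃ x ∈ s, closedBall x (δ/2)) ⊆ closedBall (0:E) (1 + δ/2) := by
      intro z hz
      simp only [mem_iUnion, exists_prop] at hz
      obtain ⟨x, hx, hzx⟩ := hz
      have h1 : dist x 0 ≤ 1 := hs.1 hx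
      have h2 : dist z x ≤ δ/2 := hzx
      have := dist_triangle z x 0
      simp only [mem_closedBall]
      linarith
    have hmeas : μ (⋃ x ∈ s, closedBall x (δ/2)) = ∑ x ∈ s, μ (closedBall x (δ/2)) :=
      measure_biUnion_finset hdisj (fun b _ => measurableSet_closedBall)
    have heach : ∀ x : E, μ (closedBall x (δ/2)) =
        ENNReal.ofReal ((δ/2) ^ n) * μ (closedBall 0 1) := fun x =>
      Measure.addHaar_closedBall' μ x hδ2.le
    have hsum : (s.card : ℝ≥0∞) * (ENNReal.ofReal ((δ/2) ^ n) * μ (closedBall 0 1)) ≤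
        ENNReal.ofReal ((1 + δ/2) ^ n) * μ (closedBall 0 1) := by
      calc (s.card : ℝ≥0∞) * (ENNReal.ofReal ((δ/2) ^ n) * μ (closedBall 0 1))
          = ∑ x ∈ s, μ (closedBall x (δ/2)) := by
            rw [Finset.sum_congr rfl (fun x _ => heach x), Finset.sum_const, nsmul_eq_mul]
        _ = μ (⋃ x ∈ s, closedBall x (δ/2)) := hmeas.symm
        _ ≤ μ (closedBall (0:E) (1 + δ/2)) := measure_mono hsub
        _ = ENNReal.ofReal ((1 + δ/2) ^ n) * μ (closedBall 0 1) :=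
            Measure.addHaar_closedBall' μ 0 (by linarith)
    have hB0 : μ (closedBall (0:E) 1) ≠ 0 := (measure_closedBall_pos μ 0 one_pos).ne'
    have hBtop : μ (closedBall (0:E) 1) ≠ ⊤ := measure_closedBall_lt_top.ne
    rw [← mul_assoc] at hsum
    have hsum2 : (s.card : ℝ≥0∞) * ENNReal.ofReal ((δ/2) ^ n) ≤
        ENNReal.ofReal ((1 + δ/2) ^ n) :=
      (ENNReal.mul_le_mul_iff_left hB0 hBtop).mp hsum
    rw [← ENNReal.ofReal_natCast s.card, ← ENNReal.ofReal_mul (by positivity)] at hsum2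
    have hreal : (s.card : ℝ) * (δ/2) ^ n ≤ (1 + δ/2) ^ n :=
      (ENNReal.ofReal_le_ofReal_iff (by positivity)).mp hsum2
    have hpow : (0:ℝ) < (δ/2) ^ n := by positivity
    rw [← le_div_iff₀ hpow] at hreal
    calc (s.card : ℝ) ≤ (1 + δ/2) ^ n / (δ/2) ^ n := hreal
      _ = ((1 + δ/2) / (δ/2)) ^ n := (div_pow _ _ _).symm
      _ = (1 + 2/δ) ^ n := by congr 1; field_simp; ring
  set 𝒮 : Set ℕ := {k | ∃ s : Finset E, good s ∧ s.card = k} with h𝒮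
  have h0 : 0 ∈ 𝒮 := ⟨∅, ⟨by simp, by simp⟩, rfl⟩
  have hbdd : BddAbove 𝒮 := by
    refine ⟨⌊(1 + 2/δ) ^ n⌋₊, fun k hk => ?_⟩
    obtain ⟨s, hs, rfl⟩ := hk
    exact Nat.le_floor (hbound s hs)
  obtain ⟨s, hs, hcard⟩ := Nat.sSup_mem ⟨0, h0⟩ hbdd
  have hmax : ∀ y ∈ closedBall (0:E) 1, ∃ x ∈ s, dist y x ≤ δ := by
    intro y hy
    by_contra h
    push_neg at h
    have hys : y ∉ s := fun hys => absurd (h y hys) (by simp [hδ.le])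
    have hgood' : good (insert y s) := by
      constructor
      · intro x hx
        rcases Finset.mem_insert.mp (by exact_mod_cast hx) with rfl | hx'
        · exact hy
        · exact hs.1 hx'
      · intro x hx y' hy' hxy
        rcases Finset.mem_insert.mp hx with rfl | hx' <;>
          rcases Finset.mem_insert.mp hy' with rfl | hy''
        · exact absurd rfl hxy
        · exact h y' hy''
        · rw [dist_comm]; exact h x hx'
        · exact hs.2 x hx' y' hy'' hxy
    have : (insert y s).card ∈ 𝒮 := ⟨_, hgood', rfl⟩
    have hle := le_csSup hbdd this
    rw [Finset.card_insert_of_notMem hys, hcard] at hle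
    omega
  have hK : 0 < s.card := by
    obtain ⟨x, hx, -⟩ := hmax 0 (mem_closedBall_self zero_le_one)
    exact Finset.card_pos.mpr ⟨x, hx⟩
  refine ⟨s.card, fun j => (s.equivFin.symm j : E), hK, hcard ▸ hbound s hs, ?_⟩
  intro y hy
  obtain ⟨x, hx, hdx⟩ := hmax y hy
  refine mem_iUnion.mpr ⟨s.equivFin ⟨x, hx⟩, ?_⟩
  simpa [Equiv.symm_apply_apply] using hdx


lemma exists_ball_cover
    (S : X → X) (A : Set X) (P : X →ₗ[ℝ] X)
    (Λ : ℕ) (hΛ : 1 ≤ Λ) (hrank : Module.finrank ℝ (LinearMap.range P) = Λ)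
    (a b : ℝ) (ha : 0 < a) (hb : 0 < b)
    (hP : ∀ φ ∈ A, ∀ ψ ∈ A, ‖P (S φ) - P (S ψ)‖ ≤ a * ‖φ - ψ‖)
    (hQ : ∀ φ ∈ A, ∀ ψ ∈ A, ‖(S φ - P (S φ)) - (S ψ - P (S ψ))‖ ≤ b * ‖φ - ψ‖)
    (α : ℝ) (hα : 0 < α) :
    ∃ K : ℕ, 0 < K ∧ (K : ℝ) ≤ (1 + 4/α) ^ Λ ∧
      ∀ (x : X) (r : ℝ), 0 < r → ∃ w : Fin K → X,
        S '' (A ∩ closedBall x r) ⊆ ⋃ j, closedBall (w j) ((α * a + 2 * b) * r) := by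
  set E := LinearMap.range P with hE
  have hfd : FiniteDimensional ℝ E := Module.finite_of_finrank_pos (by rw [hrank]; omega)
  obtain ⟨K, z, hK, hKle, hcover⟩ := exists_net E (show (0:ℝ) < α/2 by linarith)
  rw [hrank] at hKle
  have h42 : (2:ℝ) / (α/2) = 4/α := by
    rw [div_div_eq_mul_div]; ring_nf
  rw [h42] at hKle
  refine ⟨K, hK, hKle, ?_⟩
  intro x r hr
  rcases (A ∩ closedBall x r).eq_empty_or_nonempty with he | ⟨φ0, hφ0A, hφ0B⟩
  · exact ⟨fun _ => 0, by simp [he]⟩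
  set t := 2 * a * r with ht
  have htpos : 0 < t := by positivity
  refine ⟨fun j => P (S φ0) + t • ((z j : X)) + (S φ0 - P (S φ0)), ?_⟩
  rintro _ ⟨ψ, ⟨hψA, hψB⟩, rfl⟩
  have hdist : ‖ψ - φ0‖ ≤ 2 * r := by
    have h1 : dist ψ x ≤ r := hψB
    have h2 : dist φ0 x ≤ r := hφ0B
    calc ‖ψ - φ0‖ = dist ψ φ0 := (dist_eq_norm _ _).symm
      _ ≤ dist ψ x + dist x φ0 := dist_triangle _ _ _
      _ ≤ 2 * r := by rw [dist_comm x φ0]; linarith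
  have hu : ‖P (S ψ) - P (S φ0)‖ ≤ t := by
    calc ‖P (S ψ) - P (S φ0)‖ ≤ a * ‖ψ - φ0‖ := hP ψ hψA φ0 hφ0A
      _ ≤ a * (2 * r) := by nlinarith
      _ = t := by ring
  have humem : P (S ψ) - P (S φ0) ∈ E :=
    Submodule.sub_mem _ (LinearMap.mem_range_self P _) (LinearMap.mem_range_self P _)
  set u : E := ⟨P (S ψ) - P (S φ0), humem⟩ with hudef
  set e : E := t⁻¹ • u with hedef
  have he1 : e ∈ closedBall (0:E) 1 := by
    simp only [mem_closedBall, dist_zero_right, hedef, norm_smul, norm_inv,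
      Real.norm_eq_abs, abs_of_pos htpos]
    have : ‖u‖ = ‖P (S ψ) - P (S φ0)‖ := rfl
    rw [this, inv_mul_le_iff₀ htpos, mul_one]
    exact hu
  obtain ⟨j, hj⟩ := mem_iUnion.mp (hcover he1)
  have hj' : ‖(e : X) - (z j : X)‖ ≤ α/2 := by
    have : dist e (z j) ≤ α/2 := hj
    rw [dist_eq_norm] at this
    calc ‖(e : X) - (z j : X)‖ = ‖((e - z j : E) : X)‖ := by push_cast; ring_nf
      _ = ‖e - z j‖ := Submodule.norm_coe _
      _ ≤ α/2 := this
  have hcoee : (e : X) = t⁻¹ • (P (S ψ) - P (S φ0)) := rfl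
  have hmain : ‖P (S ψ) - P (S φ0) - t • (z j : X)‖ ≤ α * a * r := by
    have heq : P (S ψ) - P (S φ0) - t • (z j : X) = t • ((e : X) - (z j : X)) := by
      rw [hcoee, smul_sub, smul_smul, mul_inv_cancel₀ htpos.ne', one_smul]
    rw [heq, norm_smul, Real.norm_eq_abs, abs_of_pos htpos]
    calc t * ‖(e : X) - (z j : X)‖ ≤ t * (α/2) := by nlinarith
      _ = α * a * r := by rw [ht]; ring
  rw [mem_iUnion]
  refine ⟨j, ?_⟩
  rw [mem_closedBall, dist_eq_norm]
  have hQle : ‖(S ψ - P (S ψ)) - (S φ0 - P (S φ0))‖ ≤ 2 * b * r := by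
    calc ‖(S ψ - P (S ψ)) - (S φ0 - P (S φ0))‖ ≤ b * ‖ψ - φ0‖ := hQ ψ hψA φ0 hφ0A
      _ ≤ b * (2 * r) := by nlinarith
      _ = 2 * b * r := by ring
  have hdecomp : S ψ - (P (S φ0) + t • (z j : X) + (S φ0 - P (S φ0))) =
      (P (S ψ) - P (S φ0) - t • (z j : X)) + ((S ψ - P (S ψ)) - (S φ0 - P (S φ0))) := by
    abel
  rw [hdecomp]
  calc ‖(P (S ψ) - P (S φ0) - t • (z j : X)) + ((S ψ - P (S ψ)) - (S φ0 - P (S φ0)))‖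
      ≤ ‖P (S ψ) - P (S φ0) - t • (z j : X)‖ + ‖(S ψ - P (S ψ)) - (S φ0 - P (S φ0))‖ :=
        norm_add_le _ _
    _ ≤ α * a * r + 2 * b * r := add_le_add hmain hQle
    _ = (α * a + 2 * b) * r := by ring

/-- One-step covering propagation: a cover of `A` by `N` balls of radii `rᵢ ≤ ε`
yields a cover of `A = S(A)` by at most `N·Λ(2+4/α)^Λ` balls of radii `(αa+2b)rᵢ`,
and consequently the pre-measure contraction inequality holds. -/
theorem cover_propagation_premeasure
    (S : X → X) (A : Set X) (hA : IsCompact A) (hinv : S '' A = A)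
    (P : X →ₗ[ℝ] X) (hproj : ∀ x, P (P x) = P x)
    (Λ : ℕ) (hΛ : 1 ≤ Λ) (hrank : Module.finrank ℝ (LinearMap.range P) = Λ)
    (a b : ℝ) (ha : 0 < a) (hb : 0 < b)
    (hP : ∀ φ ∈ A, ∀ ψ ∈ A, ‖P (S φ) - P (S ψ)‖ ≤ a * ‖φ - ψ‖)
    (hQ : ∀ φ ∈ A, ∀ ψ ∈ A, ‖(S φ - P (S φ)) - (S ψ - P (S ψ))‖ ≤ b * ‖φ - ψ‖)
    (α : ℝ) (hα : 0 < α) :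
    (∀ (N : ℕ) (c : Fin N → X) (r : Fin N → ℝ) (ε : ℝ), 0 < ε →
      (∀ i, 0 < r i ∧ r i ≤ ε) → A ⊆ ⋃ i, closedBall (c i) (r i) →
      ∃ (M : ℕ) (v : Fin M → X) (ρ : Fin M → ℝ),
        (M : ℝ) ≤ N * (Λ * (2 + 4 / α) ^ Λ) ∧
        (∀ j, ∃ i, ρ j = (α * a + 2 * b) * r i) ∧
        A ⊆ ⋃ j, closedBall (v j) (ρ j)) ∧
    (∀ (d ε : ℝ), 0 ≤ d → 0 < ε →
      preHausdorff A d ((α * a + 2 * b) * ε) ≤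
        (Λ * ENNReal.ofReal ((2 + 4 / α) ^ Λ)) *
          ENNReal.ofReal ((α * a + 2 * b) ^ d) * preHausdorff A d ε) := by
  obtain ⟨K, hK, hKle, hball⟩ :=
    exists_ball_cover S A P Λ hΛ hrank a b ha hb hP hQ α hα
  have hbase : (0:ℝ) < 2 + 4/α := by positivity
  have hKle' : (K : ℝ) ≤ Λ * (2 + 4/α) ^ Λ := by
    calc (K : ℝ) ≤ (1 + 4/α) ^ Λ := hKle
      _ ≤ (2 + 4/α) ^ Λ := pow_le_pow_left₀ (by positivity) (by linarith) _
      _ ≤ Λ * (2 + 4/α) ^ Λ := le_mul_of_one_le_left (by positivity) (by exact_mod_cast hΛ)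
  have hσpos : (0:ℝ) < α * a + 2 * b := by positivity
  constructor
  · intro N c r ε hε hr hcov
    choose w hw using fun i => hball (c i) (r i) (hr i).1
    refine ⟨N * K, fun j => w (finProdFinEquiv.symm j).1 (finProdFinEquiv.symm j).2,
      fun j => (α * a + 2 * b) * r (finProdFinEquiv.symm j).1, ?_, ?_, ?_⟩
    · push_cast
      exact mul_le_mul_of_nonneg_left hKle' (Nat.cast_nonneg N)
    · intro j; exact ⟨_, rfl⟩
    · intro y hy
      rw [← hinv] at hy
      obtain ⟨ψ, hψ, rfl⟩ := hy
      obtain ⟨i, hi⟩ := mem_iUnion.mp (hcov hψ)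
      obtain ⟨j, hj⟩ := mem_iUnion.mp (hw i ⟨ψ, ⟨hψ, hi⟩, rfl⟩)
      refine mem_iUnion.mpr ⟨finProdFinEquiv (i, j), ?_⟩
      simpa [Equiv.symm_apply_apply] using hj
  · intro d ε hd hε
    haveI : NeZero K := ⟨hK.ne'⟩
    set σ := α * a + 2 * b with hσ
    set C : ℝ≥0∞ := (Λ : ℝ≥0∞) * ENNReal.ofReal ((2 + 4/α) ^ Λ) * ENNReal.ofReal (σ ^ d)
      with hC
    have hC0 : C ≠ 0 := by
      simp only [hC, ne_eq, mul_eq_zero, not_or]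
      refine ⟨⟨?_, ?_⟩, ?_⟩
      · exact_mod_cast (show Λ ≠ 0 by omega)
      · rw [ENNReal.ofReal_eq_zero, not_le]; positivity
      · rw [ENNReal.ofReal_eq_zero, not_le]; positivity
    have hCtop : C ≠ ⊤ := by
      simp [hC, ENNReal.mul_ne_top, ENNReal.natCast_ne_top, ENNReal.ofReal_ne_top]
    have key : ∀ c : ℕ → X × ℝ,
        ((∀ n, 0 < (c n).2 ∧ (c n).2 ≤ ε) ∧ A ⊆ ⋃ n, closedBall (c n).1 (c n).2) →
        preHausdorff A d (σ * ε) ≤ C * ∑' n, ENNReal.ofReal ((c n).2 ^ d) := by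
      intro c hc
      choose w hw using fun n => hball (c n).1 (c n).2 (hc.1 n).1
      set c' : ℕ → X × ℝ := fun m =>
        (w (m / K) ⟨m % K, Nat.mod_lt m hK⟩, σ * (c (m / K)).2) with hc'
      have hadm : ∀ m, 0 < (c' m).2 ∧ (c' m).2 ≤ σ * ε := fun m =>
        ⟨mul_pos hσpos (hc.1 _).1, mul_le_mul_of_nonneg_left (hc.1 _).2 hσpos.le⟩
      have hcov' : A ⊆ ⋃ m, closedBall (c' m).1 (c' m).2 := by
        intro y hy
        rw [← hinv] at hy
        obtain ⟨ψ, hψ, rfl⟩ := hy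
        obtain ⟨n, hn⟩ := mem_iUnion.mp (hc.2 hψ)
        obtain ⟨j, hj⟩ := mem_iUnion.mp (hw n ⟨ψ, ⟨hψ, hn⟩, rfl⟩)
        refine mem_iUnion.mpr ⟨(j : ℕ) + n * K, ?_⟩
        have h1 : ((j : ℕ) + n * K) / K = n := by
          rw [Nat.add_mul_div_right _ _ hK, Nat.div_eq_of_lt j.2, zero_add]
        have h2 : ((j : ℕ) + n * K) % K = (j : ℕ) := by
          rw [Nat.add_mul_mod_self_right, Nat.mod_eq_of_lt j.2]
        have hfin : (⟨((j : ℕ) + n * K) % K, Nat.mod_lt _ hK⟩ : Fin K) = j :=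
          Fin.ext (by simp [h2])
        simp only [hc', h1, hfin]
        exact hj
      have hstep : preHausdorff A d (σ * ε) ≤ ∑' m, ENNReal.ofReal ((c' m).2 ^ d) := by
        rw [preHausdorff]
        exact iInf₂_le c' ⟨hadm, hcov'⟩
      have hterm : ∀ m, ENNReal.ofReal ((c' m).2 ^ d) =
          ENNReal.ofReal (σ ^ d) * ENNReal.ofReal ((c (m / K)).2 ^ d) := by
        intro m
        have : (c' m).2 ^ d = σ ^ d * (c (m / K)).2 ^ d :=
          Real.mul_rpow hσpos.le (hc.1 _).1.le
        rw [this, ENNReal.ofReal_mul (by positivity)]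
      have hsum : ∑' m, ENNReal.ofReal ((c (m / K)).2 ^ d) =
          (K : ℝ≥0∞) * ∑' n, ENNReal.ofReal ((c n).2 ^ d) := by
        have he := (Nat.divModEquiv K).tsum_eq
          (fun p : ℕ × Fin K => ENNReal.ofReal ((c p.1).2 ^ d))
        have : ∑' m, ENNReal.ofReal ((c (m / K)).2 ^ d) =
            ∑' p : ℕ × Fin K, ENNReal.ofReal ((c p.1).2 ^ d) := he
        rw [this]
        have hp : ∑' p : ℕ × Fin K, ENNReal.ofReal ((c p.1).2 ^ d) =
            ∑' (n : ℕ) (_ : Fin K), ENNReal.ofReal ((c n).2 ^ d) :=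
          ENNReal.tsum_prod (f := fun n (_ : Fin K) => ENNReal.ofReal ((c n).2 ^ d))
        rw [hp]
        have : ∀ n : ℕ, ∑' _ : Fin K, ENNReal.ofReal ((c n).2 ^ d) =
            (K : ℝ≥0∞) * ENNReal.ofReal ((c n).2 ^ d) := by
          intro n
          rw [tsum_fintype, Finset.sum_const, nsmul_eq_mul]
          simp
        simp_rw [this]
        exact ENNReal.tsum_mul_left
      have hKC : (K : ℝ≥0∞) ≤ (Λ : ℝ≥0∞) * ENNReal.ofReal ((2 + 4/α) ^ Λ) := by
        have := ENNReal.ofReal_le_ofReal hKle'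
        rwa [ENNReal.ofReal_natCast, ENNReal.ofReal_mul (by positivity),
          ENNReal.ofReal_natCast] at this
      calc preHausdorff A d (σ * ε) ≤ ∑' m, ENNReal.ofReal ((c' m).2 ^ d) := hstep
        _ = ENNReal.ofReal (σ ^ d) * ∑' m, ENNReal.ofReal ((c (m / K)).2 ^ d) := by
            simp_rw [hterm]; exact ENNReal.tsum_mul_left
        _ = ENNReal.ofReal (σ ^ d) * ((K : ℝ≥0∞) * ∑' n, ENNReal.ofReal ((c n).2 ^ d)) := by
            rw [hsum]
        _ ≤ ENNReal.ofReal (σ ^ d) * (((Λ : ℝ≥0∞) * ENNReal.ofReal ((2 + 4/α) ^ Λ)) *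
              ∑' n, ENNReal.ofReal ((c n).2 ^ d)) := by
            gcongr
        _ = C * ∑' n, ENNReal.ofReal ((c n).2 ^ d) := by rw [hC]; ring
    have hdiv : preHausdorff A d (σ * ε) / C ≤ preHausdorff A d ε := by
      conv_rhs => rw [preHausdorff]
      refine le_iInf₂ fun c hc => ?_
      rw [ENNReal.div_le_iff hC0 hCtop]
      exact (key c hc).trans_eq (mul_comm _ _)
    calc preHausdorff A d (σ * ε) = preHausdorff A d (σ * ε) / C * C :=
          (ENNReal.div_mul_cancel hC0 hCtop).symm
      _ ≤ preHausdorff A d ε * C := mul_le_mul_left hdiv C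
      _ = C * preHausdorff A d ε := mul_comm _ _
end

section
/- Let f : (0,2) → ℝ be given by f(α) = (−ln Λ − Λ ln(2 + 4/α)) / ln(α M₁ + 2b) where Λ ≥ 1, M₁ > 0, b ≥ 0 and α M₁ + 2b < 1 for all α ∈ (0,2). If 2M₁ + 2b < 1, then for every α ∈ (0,2), f(α) is well defined (the denominator is negative) and d_H(A) ≤ (−ln Λ − Λ ln 4)/ln(2M₁ + 2b) holds as the limit bound as α ↑ 2 applied to the Hausdorff dimension estimate. -/
open MeasureTheory

/-- Remark 2.1: under `2M₁ + 2b < 1` the α-dependent Hausdorff dimension bound is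
well defined for every `α ∈ (0,2)` (the denominator is negative), and letting
`α ↑ 2` yields the α-independent bound. -/
theorem hausdorff_dim_alpha_independent_bound
    {X : Type*} [NormedAddCommGroup X] [NormedSpace ℝ X] [CompleteSpace X]
    [MeasurableSpace X] [BorelSpace X]
    (A : Set X) (hA : IsCompact A)
    (Λ : ℕ) (hΛ : 1 ≤ Λ) (M₁ b : ℝ) (hM₁ : 0 < M₁) (hb : 0 ≤ b)
    (hsmall : 2 * M₁ + 2 * b < 1)
    (hdim : ∀ α : ℝ, 0 < α → α < 2 → α * M₁ + 2 * b < 1 →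
      dimH A ≤ ENNReal.ofReal
        ((-Real.log Λ - Λ * Real.log (2 + 4 / α)) / Real.log (α * M₁ + 2 * b))) :
    (∀ α : ℝ, 0 < α → α < 2 →
      α * M₁ + 2 * b < 1 ∧ Real.log (α * M₁ + 2 * b) < 0) ∧
    dimH A ≤ ENNReal.ofReal
      ((-Real.log Λ - Λ * Real.log 4) / Real.log (2 * M₁ + 2 * b)) := by
  have key : ∀ α : ℝ, 0 < α → α < 2 → α * M₁ + 2 * b < 1 := by
    intro α hα h2
    nlinarith
  have pos : ∀ α : ℝ, 0 < α → 0 < α * M₁ + 2 * b := by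
    intro α hα; positivity
  refine ⟨fun α hα h2 => ⟨key α hα h2, Real.log_neg (pos α hα) (key α hα h2)⟩, ?_⟩
  -- limit argument
  set F : ℝ → ℝ := fun α =>
    (-Real.log Λ - Λ * Real.log (2 + 4 / α)) / Real.log (α * M₁ + 2 * b) with hF
  have h2pos : (0:ℝ) < 2 * M₁ + 2 * b := by positivity
  have hlogne : Real.log (2 * M₁ + 2 * b) ≠ 0 :=
    ne_of_lt (Real.log_neg h2pos hsmall)
  have hcont : ContinuousAt F 2 := by
    apply ContinuousAt.div
    · apply ContinuousAt.sub continuousAt_const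
      apply ContinuousAt.mul continuousAt_const
      apply (Real.continuousAt_log (by norm_num)).comp
      exact ContinuousAt.add continuousAt_const
        (ContinuousAt.div continuousAt_const continuousAt_id (by norm_num))
    · exact (Real.continuousAt_log (by norm_num; positivity)).comp
        (by fun_prop)
    · simpa using hlogne
  have hF2 : F 2 = (-Real.log Λ - Λ * Real.log 4) / Real.log (2 * M₁ + 2 * b) := by
    simp only [hF]
    norm_num
  have htendsto : Filter.Tendsto (fun α => ENNReal.ofReal (F α)) (nhdsWithin 2 (Set.Iio 2))
      (nhds (ENNReal.ofReal (F 2))) :=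
    (ENNReal.continuous_ofReal.continuousAt.comp hcont).continuousWithinAt.tendsto
  rw [← hF2]
  refine ge_of_tendsto htendsto ?_
  filter_upwards [Ioo_mem_nhdsLT_of_mem (by norm_num : (2:ℝ) ∈ Set.Ioc 0 2)] with α hα
  exact hdim α hα.1 hα.2 (key α hα.1 hα.2)
end
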